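/- Let ε > 0, β = γ = 0 and E > 0. Then (E/2, E/2, 0) and (E/2, E/2, π) are fixed points of the two-site energy-phase system. Moreover, if E ≥ ε, then (½(E + √(E² − ε²)), ½(E − √(E² − ε²)), π) and (½(E − √(E² − ε²)), ½(E + √(E² − ε²)), π) are also fixed points (where in the case E = ε both energies equal E/2, which must be positive). -/

import Mathlib

/-!
On the diagonal `E₁ = E₂` the phase equation holds trivially, so any phase with `sin ψ = 0`
gives a fixed point. Off the diagonal, at `ψ = π` the phase equation reduces to
`2 √(E₁E₂) = ε`, i.e. `E₁E₂ = (ε/2)²`; with `E₁ + E₂ = E` this makes `E₁, E₂` the two roots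
`½(E ± √(E² − ε²))` of `x² − E x + ε²/4`.
-/

/-- `(E₁, E₂, ψ)` is a fixed point of the two-site energy-phase system with
parameters `ε, γ, β`: all three right-hand sides vanish. -/
def IsTwoSiteFixedPoint (ε γ β E1 E2 ψ : ℝ) : Prop :=
  2 * ε * Real.sqrt (E1 * E2) * Real.sin ψ + 2 * β * E1 = 0 ∧
  -(2 * ε * Real.sqrt (E1 * E2) * Real.sin ψ) - 2 * γ * E2 = 0 ∧
  2 * (E2 - E1) * (1 + ε * Real.cos ψ / (2 * Real.sqrt (E1 * E2))) = 0

theorem isTwoSiteFixedPoint_of_sin_eq_zero (ε E ψ : ℝ) (hψ : Real.sin ψ = 0) :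
    IsTwoSiteFixedPoint ε 0 0 E E ψ := by
  simp [IsTwoSiteFixedPoint, hψ]

theorem isTwoSiteFixedPoint_pi_of_mul_eq {ε E1 E2 : ℝ} (hε : 0 < ε)
    (h : E1 * E2 = (ε / 2) ^ 2) : IsTwoSiteFixedPoint ε 0 0 E1 E2 Real.pi := by
  have hsqrt : Real.sqrt (E1 * E2) = ε / 2 := by
    rw [h, Real.sqrt_sq (by positivity)]
  refine ⟨by simp, by simp, ?_⟩
  rw [hsqrt, Real.cos_pi]
  field_simp
  ring

theorem half_add_sqrt_mul_half_sub_sqrt {ε E : ℝ} (h : ε ^ 2 ≤ E ^ 2) :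
    (1 / 2 * (E + Real.sqrt (E ^ 2 - ε ^ 2))) * (1 / 2 * (E - Real.sqrt (E ^ 2 - ε ^ 2))) =
      (ε / 2) ^ 2 := by
  have hs := Real.sq_sqrt (sub_nonneg.mpr h)
  linear_combination (-1 / 4 : ℝ) * hs

theorem stmt_15_general (ε E : ℝ) (hε : 0 < ε) :
    IsTwoSiteFixedPoint ε 0 0 (E / 2) (E / 2) 0 ∧
    IsTwoSiteFixedPoint ε 0 0 (E / 2) (E / 2) Real.pi ∧
    (ε ≤ E →
      IsTwoSiteFixedPoint ε 0 0
        ((1 / 2) * (E + Real.sqrt (E ^ 2 - ε ^ 2)))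
        ((1 / 2) * (E - Real.sqrt (E ^ 2 - ε ^ 2))) Real.pi ∧
      IsTwoSiteFixedPoint ε 0 0
        ((1 / 2) * (E - Real.sqrt (E ^ 2 - ε ^ 2)))
        ((1 / 2) * (E + Real.sqrt (E ^ 2 - ε ^ 2))) Real.pi) := by
  refine ⟨isTwoSiteFixedPoint_of_sin_eq_zero _ _ _ Real.sin_zero,
    isTwoSiteFixedPoint_of_sin_eq_zero _ _ _ Real.sin_pi, fun hεE => ?_⟩
  have hprod := half_add_sqrt_mul_half_sub_sqrt (pow_le_pow_left₀ hε.le hεE 2)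
  exact ⟨isTwoSiteFixedPoint_pi_of_mul_eq hε hprod,
    isTwoSiteFixedPoint_pi_of_mul_eq hε (by rwa [mul_comm])⟩

/-- The four families of breathers of the undamped, undriven two-site system. -/
theorem stmt_15 (ε E : ℝ) (hε : 0 < ε) (hE : 0 < E) :
    IsTwoSiteFixedPoint ε 0 0 (E / 2) (E / 2) 0 ∧
    IsTwoSiteFixedPoint ε 0 0 (E / 2) (E / 2) Real.pi ∧
    (ε ≤ E →
      IsTwoSiteFixedPoint ε 0 0
        ((1 / 2) * (E + Real.sqrt (E ^ 2 - ε ^ 2)))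
        ((1 / 2) * (E - Real.sqrt (E ^ 2 - ε ^ 2))) Real.pi ∧
      IsTwoSiteFixedPoint ε 0 0
        ((1 / 2) * (E - Real.sqrt (E ^ 2 - ε ^ 2)))
        ((1 / 2) * (E + Real.sqrt (E ^ 2 - ε ^ 2))) Real.pi) :=
  stmt_15_general ε E hε
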